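/- Let U : ℝ^d → ℝ be twice continuously differentiable, λ-strongly convex and L-smooth with 0 < λ ≤ L, and let π be the probability measure with density proportional to exp(−U). Then ∫_{ℝ^d} ‖∇U(x)‖² π(dx) ≤ L² d / λ. -/

import Mathlib

open MeasureTheory

open Real Filter Set
open scoped RealInnerProductSpace ENNReal

noncomputable section

lemma sq_mul_gauss_le {b : ℝ} (hb : 0 < b) (t : ℝ) :
    t ^ 2 * Real.exp (-b * t ^ 2) ≤ (2 / b) * Real.exp (-(b/2) * t ^ 2) := by
  have h1 : b/2 * t^2 ≤ Real.exp (b/2 * t^2) := by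
    have := Real.add_one_le_exp (b/2 * t^2); nlinarith [Real.exp_pos (b/2*t^2)]
  have key : (b/2 * t^2) * Real.exp (-(b/2 * t^2)) ≤ 1 := by
    calc (b/2 * t^2) * Real.exp (-(b/2 * t^2))
        ≤ Real.exp (b/2 * t^2) * Real.exp (-(b/2 * t^2)) :=
          mul_le_mul_of_nonneg_right h1 (Real.exp_pos _).le
      _ = 1 := by rw [← Real.exp_add]; simp
  have h2 : Real.exp (-b * t^2) = Real.exp (-(b/2) * t^2) * Real.exp (-(b/2) * t^2) := by
    rw [← Real.exp_add]; ring_nf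
  have h3 : t ^ 2 * Real.exp (-(b/2) * t ^ 2) ≤ 2/b := by
    have e : t^2 * Real.exp (-(b/2) * t^2) = (2/b) * ((b/2 * t^2) * Real.exp (-(b/2 * t^2))) := by
      field_simp
    rw [e]
    calc (2/b) * ((b/2 * t^2) * Real.exp (-(b/2 * t^2))) ≤ (2/b) * 1 :=
        mul_le_mul_of_nonneg_left key (by positivity)
      _ = 2/b := mul_one _
  calc t^2 * Real.exp (-b * t^2) = (t^2 * Real.exp (-(b/2) * t^2)) * Real.exp (-(b/2)*t^2) := by
        rw [h2]; ring
    _ ≤ 2/b * Real.exp (-(b/2)*t^2) := mul_le_mul_of_nonneg_right h3 (Real.exp_pos _).le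

lemma sq_mul_gauss_integrable {b : ℝ} (hb : 0 < b) :
    Integrable (fun t : ℝ => t ^ 2 * Real.exp (-b * t ^ 2)) := by
  apply Integrable.mono' (((integrable_exp_neg_mul_sq (by linarith : 0 < b/2)).const_mul (2/b)))
  · exact ((continuous_pow 2).mul (by fun_prop)).aestronglyMeasurable
  · filter_upwards with t
    rw [Real.norm_eq_abs, abs_of_nonneg (by positivity)]
    exact sq_mul_gauss_le hb t

/-- quadratic polynomial times (shifted) gaussian is integrable -/
lemma poly_gauss_integrable {b : ℝ} (hb : 0 < b) (c₁ c₂ c₃ : ℝ) :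
    Integrable (fun t : ℝ => (c₁ + c₂ * t ^ 2) * Real.exp (c₃ * t - b * t ^ 2)) := by
  have hb' : (b : ℝ) ≠ 0 := ne_of_gt hb
  set t₀ : ℝ := c₃ / (2 * b) with ht₀
  have hF : Integrable (fun s : ℝ => (c₁ + c₂ * (s + t₀) ^ 2) * Real.exp (-b * s ^ 2)) := by
    have h1 : Integrable (fun s : ℝ => (c₁ + c₂ * t₀ ^ 2) * Real.exp (-b * s ^ 2)) :=
      (integrable_exp_neg_mul_sq hb).const_mul _
    have h2 : Integrable (fun s : ℝ => (2 * c₂ * t₀) * (s * Real.exp (-b * s ^ 2))) :=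
      (integrable_mul_exp_neg_mul_sq hb).const_mul _
    have h3 : Integrable (fun s : ℝ => c₂ * (s ^ 2 * Real.exp (-b * s ^ 2))) :=
      (sq_mul_gauss_integrable hb).const_mul _
    apply ((h1.add h2).add h3).congr
    filter_upwards with s
    simp only [Pi.add_apply]
    ring
  have := (hF.comp_sub_right t₀).const_mul (Real.exp (c₃ ^ 2 / (4 * b)))
  apply this.congr
  filter_upwards with t
  have e1 : Real.exp (c₃ ^ 2 / (4 * b)) * Real.exp (-b * (t - t₀) ^ 2)
      = Real.exp (c₃ * t - b * t ^ 2) := by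
    rw [← Real.exp_add]
    congr 1
    rw [ht₀]
    field_simp
    ring
  calc Real.exp (c₃ ^ 2 / (4 * b)) * ((c₁ + c₂ * (t - t₀ + t₀) ^ 2) * Real.exp (-b * (t - t₀) ^ 2))
      = (c₁ + c₂ * t ^ 2) * (Real.exp (c₃ ^ 2 / (4 * b)) * Real.exp (-b * (t - t₀) ^ 2)) := by
        ring_nf
    _ = (c₁ + c₂ * t ^ 2) * Real.exp (c₃ * t - b * t ^ 2) := by rw [e1]

lemma poly_gauss_tendsto {b : ℝ} (hb : 0 < b) (c₁ c₂ c₃ : ℝ) {l : Filter ℝ}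
    (hl : Tendsto (fun t : ℝ => t ^ 2) l atTop) (f : ℝ → ℝ)
    (hf : ∀ t, |f t| ≤ (c₁ + c₂ * t ^ 2) * Real.exp (c₃ * t - b * t ^ 2)) :
    Tendsto f l (nhds 0) := by
  have hb' : (b : ℝ) ≠ 0 := ne_of_gt hb
  set K : ℝ := Real.exp (c₃ ^ 2 / (2 * b)) with hK
  -- bound: (c₁ + c₂ t²) exp(c₃ t - b t²) ≤ (|c₁| + |c₂| t²) K exp(-(b/2) t²)
  have hbound : ∀ t : ℝ, (c₁ + c₂ * t ^ 2) * Real.exp (c₃ * t - b * t ^ 2)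
      ≤ K * ((|c₁| + |c₂| * t ^ 2) * Real.exp (-(b/2) * t ^ 2)) := by
    intro t
    have h1 : c₁ + c₂ * t ^ 2 ≤ |c₁| + |c₂| * t ^ 2 := by
      have := le_abs_self c₁; have := le_abs_self c₂; nlinarith [sq_nonneg t]
    have h2 : c₃ * t - b * t ^ 2 ≤ c₃ ^ 2 / (2 * b) + (-(b/2) * t ^ 2) := by
      have key : c₃ ^ 2 / (2 * b) + (-(b/2) * t ^ 2) - (c₃ * t - b * t ^ 2)
          = (c₃ - b * t) ^ 2 / (2 * b) := by field_simp; ring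
      have h0 : 0 ≤ (c₃ - b * t) ^ 2 / (2 * b) :=
        div_nonneg (sq_nonneg _) (by linarith)
      linarith
    have h3 : Real.exp (c₃ * t - b * t ^ 2) ≤ K * Real.exp (-(b/2) * t ^ 2) := by
      rw [hK, ← Real.exp_add]; exact Real.exp_le_exp.2 h2
    calc (c₁ + c₂ * t ^ 2) * Real.exp (c₃ * t - b * t ^ 2)
        ≤ (|c₁| + |c₂| * t ^ 2) * Real.exp (c₃ * t - b * t ^ 2) :=
          mul_le_mul_of_nonneg_right h1 (Real.exp_pos _).le
      _ ≤ (|c₁| + |c₂| * t ^ 2) * (K * Real.exp (-(b/2) * t ^ 2)) :=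
          mul_le_mul_of_nonneg_left h3 (by positivity)
      _ = K * ((|c₁| + |c₂| * t ^ 2) * Real.exp (-(b/2) * t ^ 2)) := by ring
  -- the bound tends to 0
  have hG : Tendsto (fun v : ℝ => K * ((|c₁| + (2*|c₂|/b) * v) * Real.exp (-v))) atTop (nhds 0) := by
    have hA : Tendsto (fun v : ℝ => |c₁| * Real.exp (-v)) atTop (nhds 0) := by
      simpa using (Real.tendsto_exp_neg_atTop_nhds_zero.const_mul (|c₁|))
    have hB : Tendsto (fun v : ℝ => (2*|c₂|/b) * (v * Real.exp (-v))) atTop (nhds 0) := by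
      have := (tendsto_pow_mul_exp_neg_atTop_nhds_zero 1).const_mul (2*|c₂|/b)
      simpa using this
    have := (hA.add hB).const_mul K
    simpa [mul_add, mul_assoc, add_mul] using this.congr (fun v => by ring)
  have hu : Tendsto (fun t : ℝ => (b/2) * t ^ 2) l atTop :=
    (tendsto_const_mul_atTop_of_pos (by linarith)).2 hl
  have hBt : Tendsto (fun t : ℝ => K * ((|c₁| + |c₂| * t ^ 2) * Real.exp (-(b/2) * t ^ 2)))
      l (nhds 0) := by
    have := hG.comp hu
    apply this.congr
    intro t
    simp only [Function.comp_apply]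
    have e1 : (2*|c₂|/b) * ((b/2) * t ^ 2) = |c₂| * t ^ 2 := by field_simp
    rw [e1]
    congr 2
    ring
  apply squeeze_zero_norm _ hBt
  intro t
  exact (hf t).trans (hbound t)

set_option maxHeartbeats 1000000 in
lemma oneDim_slice_bound {lam L : ℝ} (hlam : 0 < lam) (hL : 0 < L)
    (ψ φ φ' : ℝ → ℝ)
    (hψ : ∀ t, HasDerivAt ψ (φ t) t)
    (hφ : ∀ t, HasDerivAt φ (φ' t) t)
    (hφ'c : Continuous φ')
    (hφ'L : ∀ t, |φ' t| ≤ L)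
    (hsc : ∀ s t : ℝ, ψ s + φ s * (t - s) + lam / 2 * (t - s) ^ 2 ≤ ψ t) :
    ∫⁻ t, ENNReal.ofReal (Real.exp (-ψ t) * φ t ^ 2) ≤
      ENNReal.ofReal L * ∫⁻ t, ENNReal.ofReal (Real.exp (-ψ t)) := by
  have hψc : Continuous ψ := continuous_iff_continuousAt.2 fun t => (hψ t).continuousAt
  have hφc : Continuous φ := continuous_iff_continuousAt.2 fun t => (hφ t).continuousAt
  set b : ℝ := lam / 2 with hbdef
  have hb : 0 < b := by positivity
  set c₃ : ℝ := -φ 0 with hc₃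
  set K₀ : ℝ := Real.exp (-ψ 0) with hK₀
  have hK₀pos : 0 < K₀ := Real.exp_pos _
  have hexp : ∀ t, Real.exp (-ψ t) ≤ K₀ * Real.exp (c₃ * t - b * t ^ 2) := by
    intro t
    have h := hsc 0 t
    simp only [sub_zero] at h
    rw [hK₀, ← Real.exp_add]
    apply Real.exp_le_exp.2
    rw [hc₃]; linarith
  have hφgrowth : ∀ t, |φ t| ≤ |φ 0| + L * |t| := by
    intro t
    have := Convex.norm_image_sub_le_of_norm_hasDerivWithin_le
      (f := φ) (f' := φ') (s := Set.univ)
      (fun x _ => (hφ x).hasDerivWithinAt) (fun x _ => by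
        rw [Real.norm_eq_abs]; exact hφ'L x) convex_univ (mem_univ 0) (mem_univ t)
    rw [Real.norm_eq_abs, Real.norm_eq_abs, sub_zero] at this
    calc |φ t| ≤ |φ t - φ 0| + |φ 0| := by
          have := abs_sub_abs_le_abs_sub (φ t) (φ 0); linarith [abs_abs (φ t)]
      _ ≤ |φ 0| + L * |t| := by linarith
  -- integrability facts
  have hI1 : Integrable (fun t => Real.exp (-ψ t)) := by
    apply Integrable.mono' (poly_gauss_integrable hb K₀ 0 c₃)
    · exact (hψc.neg.rexp).aestronglyMeasurable
    · filter_upwards with t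
      rw [Real.norm_eq_abs, abs_of_pos (Real.exp_pos _)]
      simpa using hexp t
  have hsq : ∀ t, φ t ^ 2 ≤ 2 * φ 0 ^ 2 + 2 * L ^ 2 * t ^ 2 := by
    intro t
    have h := hφgrowth t
    have h0 : |φ t| ^ 2 ≤ (|φ 0| + L * |t|) ^ 2 := by
      apply sq_le_sq' _ h; linarith [abs_nonneg (φ t), abs_nonneg (φ 0), abs_nonneg t,
        mul_nonneg hL.le (abs_nonneg t)]
    rw [sq_abs] at h0
    have e1 : |φ 0| ^ 2 = φ 0 ^ 2 := sq_abs _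
    have e2 : |t| ^ 2 = t ^ 2 := sq_abs _
    nlinarith [sq_nonneg (|φ 0| - L * |t|)]
  have hI2 : Integrable (fun t => Real.exp (-ψ t) * φ t ^ 2) := by
    apply Integrable.mono' (poly_gauss_integrable hb (2 * φ 0 ^ 2 * K₀) (2 * L ^ 2 * K₀) c₃)
    · exact ((hψc.neg.rexp).mul (hφc.pow 2)).aestronglyMeasurable
    · filter_upwards with t
      rw [Real.norm_eq_abs, abs_of_nonneg (by positivity)]
      calc Real.exp (-ψ t) * φ t ^ 2
          ≤ (K₀ * Real.exp (c₃ * t - b * t ^ 2)) * (2 * φ 0 ^ 2 + 2 * L ^ 2 * t ^ 2) := by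
            apply mul_le_mul (hexp t) (hsq t) (by positivity) (by positivity)
        _ = (2 * φ 0 ^ 2 * K₀ + 2 * L ^ 2 * K₀ * t ^ 2) * Real.exp (c₃ * t - b * t ^ 2) := by
            ring
  have hI3 : Integrable (fun t => Real.exp (-ψ t) * φ' t) := by
    apply Integrable.mono' (poly_gauss_integrable hb (L * K₀) 0 c₃)
    · exact ((hψc.neg.rexp).mul hφ'c).aestronglyMeasurable
    · filter_upwards with t
      rw [Real.norm_eq_abs, abs_mul, abs_of_pos (Real.exp_pos _)]
      calc Real.exp (-ψ t) * |φ' t| ≤ (K₀ * Real.exp (c₃ * t - b * t ^ 2)) * L :=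
            mul_le_mul (hexp t) (hφ'L t) (abs_nonneg _) (by positivity)
        _ = (L * K₀ + 0 * t ^ 2) * Real.exp (c₃ * t - b * t ^ 2) := by ring
  -- the function g and its derivative
  set g : ℝ → ℝ := fun t => φ t * Real.exp (-ψ t) with hgdef
  have hg : ∀ t, HasDerivAt g ((φ' t - φ t ^ 2) * Real.exp (-ψ t)) t := by
    intro t
    have h1 : HasDerivAt (fun t => Real.exp (-ψ t)) (Real.exp (-ψ t) * (-φ t)) t :=
      ((hψ t).neg).exp
    have := (hφ t).mul h1
    convert (show HasDerivAt g _ t from this) using 1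
    ring
  -- limits of g at ±∞
  have hgbound : ∀ t, |g t| ≤ ((K₀ * (|φ 0| + L / 2)) + (K₀ * (L / 2)) * t ^ 2) *
      Real.exp (c₃ * t - b * t ^ 2) := by
    intro t
    have habs : |t| ≤ (1 + t ^ 2) / 2 := by nlinarith [sq_nonneg (|t| - 1), sq_abs t, abs_nonneg t]
    rw [hgdef, abs_mul, abs_of_pos (Real.exp_pos _)]
    calc |φ t| * Real.exp (-ψ t)
        ≤ (|φ 0| + L * |t|) * (K₀ * Real.exp (c₃ * t - b * t ^ 2)) :=
          mul_le_mul (hφgrowth t) (hexp t) (Real.exp_pos _).le (by positivity)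
      _ ≤ (|φ 0| + L * ((1 + t ^ 2) / 2)) * (K₀ * Real.exp (c₃ * t - b * t ^ 2)) := by
          apply mul_le_mul_of_nonneg_right _ (by positivity)
          have := mul_le_mul_of_nonneg_left habs hL.le
          linarith
      _ = ((K₀ * (|φ 0| + L / 2)) + (K₀ * (L / 2)) * t ^ 2) * Real.exp (c₃ * t - b * t ^ 2) := by
          ring
  have hgtop : Tendsto g atTop (nhds 0) :=
    poly_gauss_tendsto hb _ _ c₃ (tendsto_pow_atTop (by norm_num : (2:ℕ) ≠ 0)) g hgbound
  have hsqbot : Tendsto (fun t : ℝ => t ^ 2) atBot atTop := by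
    apply tendsto_atTop_mono' atBot _ tendsto_neg_atBot_atTop
    filter_upwards [eventually_le_atBot (-1 : ℝ)] with t ht
    nlinarith
  have hgbot : Tendsto g atBot (nhds 0) :=
    poly_gauss_tendsto hb _ _ c₃ hsqbot g hgbound
  -- integral of g' vanishes
  have hIg' : Integrable (fun t => (φ' t - φ t ^ 2) * Real.exp (-ψ t)) := by
    apply (hI3.sub hI2).congr
    filter_upwards with t
    simp only [Pi.sub_apply]
    ring
  have htop : ∫ t in Set.Ioi (0:ℝ), (φ' t - φ t ^ 2) * Real.exp (-ψ t) = 0 - g 0 :=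
    integral_Ioi_of_hasDerivAt_of_tendsto' (fun x _ => hg x) hIg'.integrableOn hgtop
  have hbot : ∫ t in Set.Iic (0:ℝ), (φ' t - φ t ^ 2) * Real.exp (-ψ t) = g 0 - 0 :=
    integral_Iic_of_hasDerivAt_of_tendsto' (fun x _ => hg x) hIg'.integrableOn hgbot
  have htot : ∫ t, (φ' t - φ t ^ 2) * Real.exp (-ψ t) = 0 := by
    rw [← intervalIntegral.integral_Iic_add_Ioi hIg'.integrableOn hIg'.integrableOn, htop, hbot]
    ring
  have heq : ∫ t, Real.exp (-ψ t) * φ t ^ 2 = ∫ t, Real.exp (-ψ t) * φ' t := by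
    have hsub := integral_sub hI3 hI2
    have : ∫ t, (Real.exp (-ψ t) * φ' t - Real.exp (-ψ t) * φ t ^ 2) = 0 := by
      rw [← htot]
      congr 1
      funext t
      ring
    rw [this] at hsub
    linarith [hsub]
  have hle : ∫ t, Real.exp (-ψ t) * φ' t ≤ L * ∫ t, Real.exp (-ψ t) := by
    rw [← integral_const_mul]
    apply integral_mono hI3 (hI1.const_mul L)
    intro t
    have := (abs_le.1 (hφ'L t)).2
    have := Real.exp_pos (-ψ t)
    calc Real.exp (-ψ t) * φ' t ≤ Real.exp (-ψ t) * L := by nlinarith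
      _ = L * Real.exp (-ψ t) := by ring
  -- convert to lintegral
  rw [← ofReal_integral_eq_lintegral_ofReal hI2
      (Filter.Eventually.of_forall fun t => by positivity),
    ← ofReal_integral_eq_lintegral_ofReal hI1
      (Filter.Eventually.of_forall fun t => (Real.exp_pos _).le),
    ← ENNReal.ofReal_mul hL.le]
  exact ENNReal.ofReal_le_ofReal (by rw [heq]; exact hle)


set_option maxHeartbeats 1000000 in
/-- first-order strong convexity inequality -/
lemma sc_tangent {d : ℕ} (U : EuclideanSpace ℝ (Fin d) → ℝ) (lam : ℝ)
    (hdiff : Differentiable ℝ U)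
    (hconv : ConvexOn ℝ Set.univ (fun x => U x - lam / 2 * ‖x‖ ^ 2))
    (x y : EuclideanSpace ℝ (Fin d)) :
    U x + ⟪gradient U x, y - x⟫ + lam / 2 * ‖y - x‖ ^ 2 ≤ U y := by
  set v := y - x with hv
  set ρ : ℝ → ℝ := fun t => U (x + t • v) - lam / 2 * ‖v‖ ^ 2 * t ^ 2 with hρ
  -- convexity of ρ
  have hρconv : ConvexOn ℝ Set.univ ρ := by
    have hcomp := hconv.comp_affineMap (AffineMap.lineMap x y)
    rw [Set.preimage_univ] at hcomp
    have haff : ConvexOn ℝ Set.univ (fun t : ℝ => (lam * ⟪x, v⟫) * t + lam / 2 * ‖x‖ ^ 2) := by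
      have hl := LinearMap.convexOn ((lam * ⟪x, v⟫) • (LinearMap.id : ℝ →ₗ[ℝ] ℝ))
        convex_univ
      have := hl.add_const (lam / 2 * ‖x‖ ^ 2)
      apply this.congr
      · intro t _
        simp [smul_eq_mul]
    have hsum := hcomp.add haff
    apply hsum.congr
    intro t _
    have hlm : (AffineMap.lineMap x y : ℝ →ᵃ[ℝ] EuclideanSpace ℝ (Fin d)) t = x + t • v := by
      rw [AffineMap.lineMap_apply_module']
      rw [hv]; abel
    have hnorm : ‖x + t • v‖ ^ 2 = ‖x‖ ^ 2 + 2 * (t * ⟪x, v⟫) + t ^ 2 * ‖v‖ ^ 2 := by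
      rw [norm_add_sq_real, real_inner_smul_right, norm_smul]
      simp [mul_pow, sq_abs]
    simp only [Function.comp_apply, Pi.add_apply, hlm, hρ]
    rw [hnorm]
    ring
  -- derivative of ρ at 0
  have hline : ∀ t : ℝ, HasDerivAt (fun s : ℝ => x + s • v) v t := by
    intro t
    have h := ((hasDerivAt_id t).smul_const v).const_add x
    simpa using h
  have hUd : ∀ t : ℝ, HasDerivAt (fun s : ℝ => U (x + s • v)) ⟪gradient U (x + t • v), v⟫ t := by
    intro t
    have hgrad := (hdiff (x + t • v)).hasGradientAt
    have hfd := hasGradientAt_iff_hasFDerivAt.1 hgrad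
    have := hfd.comp_hasDerivAt t (hline t)
    simpa using (show HasDerivAt (fun s : ℝ => U (x + s • v)) _ t from this)
  have hρd : HasDerivAt ρ ⟪gradient U x, v⟫ 0 := by
    have hq : HasDerivAt (fun t : ℝ => lam / 2 * ‖v‖ ^ 2 * t ^ 2) (lam / 2 * ‖v‖ ^ 2 * (2 * 0)) 0 := by
      have := ((hasDerivAt_pow 2 (0:ℝ)).const_mul (lam / 2 * ‖v‖ ^ 2))
      simpa using this
    have := (hUd 0).sub hq
    simp only [zero_smul, add_zero, mul_zero] at this
    simpa [hρ, Pi.sub_def] using this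
  -- tangent inequality
  have hslope := hρconv.le_slope_of_hasDerivAt (Set.mem_univ (0:ℝ)) (Set.mem_univ (1:ℝ))
    zero_lt_one hρd
  rw [slope_def_field] at hslope
  have hρ0 : ρ 0 = U x := by simp [hρ]
  have hρ1 : ρ 1 = U y - lam / 2 * ‖v‖ ^ 2 := by
    simp [hρ, hv]
  rw [hρ0, hρ1] at hslope
  have : ⟪gradient U x, v⟫ ≤ U y - lam / 2 * ‖v‖ ^ 2 - U x := by
    calc ⟪gradient U x, v⟫ ≤ (U y - lam / 2 * ‖v‖ ^ 2 - U x) / (1 - 0) := hslope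
      _ = U y - lam / 2 * ‖v‖ ^ 2 - U x := by norm_num
  rw [hv] at this ⊢
  linarith


set_option maxHeartbeats 1600000 in
lemma coord_bound {d : ℕ} (U : EuclideanSpace ℝ (Fin d) → ℝ) (L lam : ℝ)
    (hlam : 0 < lam) (hlamL : lam ≤ L)
    (hC2 : ContDiff ℝ 2 U)
    (hsmooth : ∀ x y, ‖gradient U x - gradient U y‖ ≤ L * ‖x - y‖)
    (hconv : ConvexOn ℝ Set.univ (fun x => U x - lam / 2 * ‖x‖ ^ 2))
    (i : Fin d) :
    ∫⁻ x, ENNReal.ofReal (Real.exp (-U x) * (gradient U x i) ^ 2) ≤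
      ENNReal.ofReal L * ∫⁻ x, ENNReal.ofReal (Real.exp (-U x)) := by
  classical
  have hL : 0 < L := lt_of_lt_of_le hlam hlamL
  have hdiff : Differentiable ℝ U := hC2.differentiable two_ne_zero
  have hUc : Continuous U := hC2.continuous
  -- coordinates of the gradient via fderiv
  have hcoord : ∀ (w : EuclideanSpace ℝ (Fin d)) (j : Fin d),
      gradient U w j = fderiv ℝ U w (EuclideanSpace.single j 1) := by
    intro w j
    have h := hasGradientAt_iff_hasFDerivAt.1 (hdiff w).hasGradientAt
    rw [h.fderiv]
    rw [InnerProductSpace.toDual_apply_apply]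
    rw [EuclideanSpace.inner_single_right]; simp
  have hfdC1 : ContDiff ℝ 1 (fun w : EuclideanSpace ℝ (Fin d) =>
      fderiv ℝ U w (EuclideanSpace.single i 1)) :=
    (ContinuousLinearMap.apply ℝ ℝ (EuclideanSpace.single i (1:ℝ))).contDiff.comp
      (hC2.fderiv_right (by norm_num))
  have hgcont : Continuous (fun w : EuclideanSpace ℝ (Fin d) => gradient U w i) := by
    have := hfdC1.continuous
    apply Continuous.congr this
    intro w
    exact (hcoord w i).symm
  -- measurable functions
  set F₀ : EuclideanSpace ℝ (Fin d) → ℝ≥0∞ :=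
    fun x => ENNReal.ofReal (Real.exp (-U x) * (gradient U x i) ^ 2) with hF₀def
  set G₀ : EuclideanSpace ℝ (Fin d) → ℝ≥0∞ :=
    fun x => ENNReal.ofReal (Real.exp (-U x)) with hG₀def
  have hF₀m : Measurable F₀ :=
    (ENNReal.continuous_ofReal.comp ((hUc.neg.rexp).mul (hgcont.pow 2))).measurable
  have hG₀m : Measurable G₀ := (ENNReal.continuous_ofReal.comp (hUc.neg.rexp)).measurable
  -- transfer to the product space
  set e := (MeasurableEquiv.toLp 2 (Fin d → ℝ)).symm with hedef
  have hvps : MeasurePreserving (⇑e.symm) volume volume :=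
    (EuclideanSpace.volume_preserving_symm_measurableEquiv_toLp (Fin d)).symm e
  rw [← hvps.lintegral_comp hF₀m, ← hvps.lintegral_comp hG₀m]
  have hpi : (volume : Measure (Fin d → ℝ)) = Measure.pi fun _ => volume := rfl
  set F : (Fin d → ℝ) → ℝ≥0∞ := fun y => F₀ (e.symm y) with hFdef
  set G : (Fin d → ℝ) → ℝ≥0∞ := fun y => G₀ (e.symm y) with hGdef
  have hFm : Measurable F := hF₀m.comp e.symm.measurable
  have hGm : Measurable G := hG₀m.comp e.symm.measurable
  have key : ∫⁻ y, F y ∂(Measure.pi fun _ : Fin d => (volume : Measure ℝ)) ≤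
      ∫⁻ y, ENNReal.ofReal L * G y ∂(Measure.pi fun _ : Fin d => (volume : Measure ℝ)) := by
    apply lintegral_le_of_lmarginal_le {i} hFm (hGm.const_mul _)
    intro x
    rw [lmarginal_singleton, lmarginal_singleton]
    -- set up the slice
    set X : EuclideanSpace ℝ (Fin d) := e.symm x with hXdef
    set v : EuclideanSpace ℝ (Fin d) := EuclideanSpace.single i (1:ℝ) with hvdef
    set A : ℝ → EuclideanSpace ℝ (Fin d) := fun t => X + (t - X i) • v with hAdef
    have hupd : ∀ t : ℝ, (e.symm (Function.update x i t) : EuclideanSpace ℝ (Fin d)) = A t := by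
      intro t
      have h0 : e.symm (Function.update x i t) = Function.update X i t := rfl
      apply WithLp.ofLp_injective
      rw [h0]
      funext j
      by_cases hj : j = i
      · subst hj
        simp only [Function.update_self, hAdef, PiLp.add_apply, PiLp.smul_apply, hvdef,
          EuclideanSpace.single_apply, smul_eq_mul]
        norm_num
      · simp only [Function.update_of_ne hj, hAdef, PiLp.add_apply, PiLp.smul_apply, hvdef,
          EuclideanSpace.single_apply, smul_eq_mul]
        norm_num [hj]
    have hAsub : ∀ s t : ℝ, A t - A s = (t - s) • v := by
      intro s t
      rw [hAdef]
      simp only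
      module
    have hA : ∀ t : ℝ, HasDerivAt A v t := by
      intro t
      have h := (((hasDerivAt_id t).sub_const (X i)).smul_const v).const_add X
      simpa [hAdef] using h
    have hAcd : ContDiff ℝ 1 A :=
      contDiff_const.add (((contDiff_id.sub contDiff_const)).smul contDiff_const)
    set ψ : ℝ → ℝ := fun t => U (A t) with hψdef
    set φ : ℝ → ℝ := fun t => fderiv ℝ U (A t) (EuclideanSpace.single i 1) with hφdef
    have hφgrad : ∀ t, φ t = gradient U (A t) i := fun t => (hcoord (A t) i).symm
    have hψd : ∀ t, HasDerivAt ψ (φ t) t := by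
      intro t
      have hfd := hasGradientAt_iff_hasFDerivAt.1 (hdiff (A t)).hasGradientAt
      have h := hfd.comp_hasDerivAt t (hA t)
      have : ⟪gradient U (A t), v⟫ = φ t := by
        rw [hφgrad t, hvdef]
        rw [EuclideanSpace.inner_single_right]; simp
      rw [← this]
      simpa using (show HasDerivAt ψ _ t from h)
    have hφC1 : ContDiff ℝ 1 φ := hfdC1.comp hAcd
    have hφd : ∀ t, HasDerivAt φ (deriv φ t) t :=
      fun t => (hφC1.differentiable one_ne_zero t).hasDerivAt
    have hφ'c : Continuous (deriv φ) := hφC1.continuous_deriv le_rfl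
    have hvnorm : ‖v‖ = 1 := by rw [hvdef, EuclideanSpace.norm_single]; norm_num
    have hlip : LipschitzWith (Real.toNNReal L) φ := by
      apply LipschitzWith.of_dist_le_mul
      intro a b
      rw [Real.dist_eq, Real.dist_eq]
      have h1 : φ a - φ b = gradient U (A a) i - gradient U (A b) i := by
        rw [hφgrad a, hφgrad b]
      have h2 : |gradient U (A a) i - gradient U (A b) i|
          ≤ ‖gradient U (A a) - gradient U (A b)‖ := by
        have heq : gradient U (A a) i - gradient U (A b) i
            = ⟪gradient U (A a) - gradient U (A b), v⟫ := by
          rw [hvdef]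
          simp [EuclideanSpace.inner_single_right, PiLp.sub_apply]
        rw [heq]
        calc |⟪gradient U (A a) - gradient U (A b), v⟫|
            ≤ ‖gradient U (A a) - gradient U (A b)‖ * ‖v‖ := abs_real_inner_le_norm _ _
          _ = ‖gradient U (A a) - gradient U (A b)‖ := by rw [hvnorm, mul_one]
      have h3 : ‖gradient U (A a) - gradient U (A b)‖ ≤ L * |a - b| := by
        have := hsmooth (A a) (A b)
        have hAn : ‖A a - A b‖ = |a - b| := by
          rw [hAsub b a, norm_smul, hvnorm, Real.norm_eq_abs, mul_one]
        rw [hAn] at this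
        exact this
      rw [Real.coe_toNNReal L hL.le, h1]
      exact h2.trans h3
    have hφ'L : ∀ t, |deriv φ t| ≤ L := by
      intro t
      have := (hφd t).le_of_lipschitz hlip
      rw [Real.norm_eq_abs] at this
      exact this.trans_eq (Real.coe_toNNReal L hL.le)
    have hsc : ∀ s t : ℝ, ψ s + φ s * (t - s) + lam / 2 * (t - s) ^ 2 ≤ ψ t := by
      intro s t
      have h := sc_tangent U lam hdiff hconv (A s) (A t)
      rw [hAsub s t] at h
      rw [real_inner_smul_right] at h
      have hn : ‖(t - s) • v‖ ^ 2 = (t - s) ^ 2 := by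
        rw [norm_smul, hvnorm, Real.norm_eq_abs, mul_one, sq_abs]
      rw [hn] at h
      have hinner : ⟪gradient U (A s), v⟫ = φ s := by
        rw [hφgrad s, hvdef]
        rw [EuclideanSpace.inner_single_right]; simp
      rw [hinner] at h
      linarith
    have hmain := oneDim_slice_bound hlam hL ψ φ (deriv φ) hψd hφd hφ'c hφ'L hsc
    -- rewrite slice integrands
    have hFs : ∀ t : ℝ, F (Function.update x i t)
        = ENNReal.ofReal (Real.exp (-ψ t) * φ t ^ 2) := by
      intro t
      rw [hFdef]
      simp only [hF₀def, hupd t, hψdef, hφgrad t]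
    have hGs : ∀ t : ℝ, G (Function.update x i t) = ENNReal.ofReal (Real.exp (-ψ t)) := by
      intro t
      rw [hGdef]
      simp only [hG₀def, hupd t, hψdef]
    calc ∫⁻ t, F (Function.update x i t)
        = ∫⁻ t, ENNReal.ofReal (Real.exp (-ψ t) * φ t ^ 2) := by
          apply lintegral_congr
          intro t
          exact hFs t
      _ ≤ ENNReal.ofReal L * ∫⁻ t, ENNReal.ofReal (Real.exp (-ψ t)) := hmain
      _ = ∫⁻ t, ENNReal.ofReal L * ENNReal.ofReal (Real.exp (-ψ t)) :=
          (lintegral_const_mul' _ _ ENNReal.ofReal_ne_top).symm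
      _ = ∫⁻ t, ENNReal.ofReal L * G (Function.update x i t) := by
          apply lintegral_congr
          intro t
          rw [hGs t]
  calc ∫⁻ y, F₀ (e.symm y) = ∫⁻ y, F y ∂(Measure.pi fun _ : Fin d => (volume : Measure ℝ)) := by
        rw [← hpi]
    _ ≤ ∫⁻ y, ENNReal.ofReal L * G y ∂(Measure.pi fun _ : Fin d => (volume : Measure ℝ)) := key
    _ = ENNReal.ofReal L * ∫⁻ y, G y ∂(Measure.pi fun _ : Fin d => (volume : Measure ℝ)) :=
        lintegral_const_mul' _ _ ENNReal.ofReal_ne_top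
    _ = ENNReal.ofReal L * ∫⁻ y, G₀ (e.symm y) := by rw [← hpi]


set_option maxHeartbeats 1600000 in
lemma global_bound {d : ℕ} (U : EuclideanSpace ℝ (Fin d) → ℝ) (L lam : ℝ)
    (hlam : 0 < lam) (hlamL : lam ≤ L)
    (hC2 : ContDiff ℝ 2 U)
    (hsmooth : ∀ x y, ‖gradient U x - gradient U y‖ ≤ L * ‖x - y‖)
    (hconv : ConvexOn ℝ Set.univ (fun x => U x - lam / 2 * ‖x‖ ^ 2)) :
    ∫⁻ x, ENNReal.ofReal (Real.exp (-U x) * ‖gradient U x‖ ^ 2) ≤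
      ENNReal.ofReal L * d * ∫⁻ x, ENNReal.ofReal (Real.exp (-U x)) := by
  have hdiff : Differentiable ℝ U := hC2.differentiable two_ne_zero
  have hUc : Continuous U := hC2.continuous
  have hcoord : ∀ (w : EuclideanSpace ℝ (Fin d)) (j : Fin d),
      gradient U w j = fderiv ℝ U w (EuclideanSpace.single j 1) := by
    intro w j
    have h := hasGradientAt_iff_hasFDerivAt.1 (hdiff w).hasGradientAt
    rw [h.fderiv]
    rw [InnerProductSpace.toDual_apply_apply]
    rw [EuclideanSpace.inner_single_right]; simp
  have hgcont : ∀ j : Fin d, Continuous (fun w : EuclideanSpace ℝ (Fin d) => gradient U w j) := by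
    intro j
    have hfdC1 : ContDiff ℝ 1 (fun w : EuclideanSpace ℝ (Fin d) =>
        fderiv ℝ U w (EuclideanSpace.single j 1)) :=
      (ContinuousLinearMap.apply ℝ ℝ (EuclideanSpace.single j (1:ℝ))).contDiff.comp
        (hC2.fderiv_right (by norm_num))
    exact hfdC1.continuous.congr fun w => (hcoord w j).symm
  have hnorm : ∀ w : EuclideanSpace ℝ (Fin d), ‖w‖ ^ 2 = ∑ j, (w j) ^ 2 := by
    intro w
    rw [EuclideanSpace.norm_eq, Real.sq_sqrt (by positivity)]
    simp [sq_abs]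
  set N : ℝ≥0∞ := ∫⁻ x, ENNReal.ofReal (Real.exp (-U x)) with hN
  calc ∫⁻ x, ENNReal.ofReal (Real.exp (-U x) * ‖gradient U x‖ ^ 2)
      = ∫⁻ x, ∑ j, ENNReal.ofReal (Real.exp (-U x) * (gradient U x j) ^ 2) := by
        apply lintegral_congr
        intro x
        rw [hnorm (gradient U x), Finset.mul_sum,
          ENNReal.ofReal_sum_of_nonneg (fun j _ => by positivity)]
    _ = ∑ j, ∫⁻ x, ENNReal.ofReal (Real.exp (-U x) * (gradient U x j) ^ 2) := by
        apply lintegral_finset_sum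
        intro j _
        exact (ENNReal.continuous_ofReal.comp ((hUc.neg.rexp).mul ((hgcont j).pow 2))).measurable
    _ ≤ ∑ _j : Fin d, ENNReal.ofReal L * N :=
        Finset.sum_le_sum fun j _ => coord_bound U L lam hlam hlamL hC2 hsmooth hconv j
    _ = ENNReal.ofReal L * d * N := by
        rw [Finset.sum_const, Finset.card_univ, Fintype.card_fin]
        rw [nsmul_eq_mul]
        ring

lemma exp_neg_integrable {d : ℕ} (U : EuclideanSpace ℝ (Fin d) → ℝ) (lam : ℝ)
    (hlam : 0 < lam)
    (hC2 : ContDiff ℝ 2 U)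
    (hconv : ConvexOn ℝ Set.univ (fun x => U x - lam / 2 * ‖x‖ ^ 2)) :
    Integrable (fun x : EuclideanSpace ℝ (Fin d) => Real.exp (-U x)) := by
  have hdiff : Differentiable ℝ U := hC2.differentiable two_ne_zero
  have hUc : Continuous U := hC2.continuous
  set w : EuclideanSpace ℝ (Fin d) := -gradient U 0 with hw
  have hb : (0:ℝ) < (((lam/2 : ℝ) : ℂ)).re := by
    simp only [Complex.ofReal_re]
    positivity
  have hint := GaussianFourier.integrable_cexp_neg_mul_sq_norm_add (V := EuclideanSpace ℝ (Fin d)) hb 1 w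
  apply ((hint.norm).const_mul (Real.exp (-U 0))).mono'
  · exact (hUc.neg.rexp).aestronglyMeasurable
  · filter_upwards with x
    rw [Real.norm_eq_abs, abs_of_pos (Real.exp_pos _)]
    have htan := sc_tangent U lam hdiff hconv 0 x
    simp only [sub_zero] at htan
    have hexp : -U x ≤ -U 0 + (⟪w, x⟫ - lam/2 * ‖x‖^2) := by
      rw [hw, inner_neg_left]
      linarith
    have hnorm_cexp : ‖Complex.exp (-(((lam/2 : ℝ) : ℂ)) * (‖x‖:ℂ)^2 + 1 * (⟪w, x⟫ : ℝ))‖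
        = Real.exp (⟪w, x⟫ - lam/2 * ‖x‖^2) := by
      rw [Complex.norm_exp]
      congr 1
      simp [Complex.add_re, Complex.mul_re, ← Complex.ofReal_pow, Complex.ofReal_re, Complex.ofReal_im]
      ring
    calc Real.exp (-U x) ≤ Real.exp (-U 0 + (⟪w, x⟫ - lam/2 * ‖x‖^2)) := Real.exp_le_exp.2 hexp
      _ = Real.exp (-U 0) * Real.exp (⟪w, x⟫ - lam/2 * ‖x‖^2) := Real.exp_add _ _
      _ = Real.exp (-U 0) * ‖Complex.exp (-(((lam/2 : ℝ) : ℂ)) * (‖x‖:ℂ)^2 + 1 * (⟪w, x⟫ : ℝ))‖ := by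
          rw [hnorm_cexp]


set_option maxHeartbeats 1600000 in
/-- for a λ-strongly convex, L-smooth, C² potential `U` and
`π ∝ exp(−U)`, one has `∫ ‖∇U‖² dπ ≤ L² d / λ`. -/
theorem integral_sq_norm_gradient_le
    (d : ℕ) (hd : 1 ≤ d)
    (U : EuclideanSpace ℝ (Fin d) → ℝ) (L lam : ℝ)
    (hlam : 0 < lam) (hlamL : lam ≤ L)
    (hC2 : ContDiff ℝ 2 U)
    (hsmooth : ∀ x y, ‖gradient U x - gradient U y‖ ≤ L * ‖x - y‖)
    (hconv : ConvexOn ℝ Set.univ (fun x => U x - lam / 2 * ‖x‖ ^ 2)) :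
    ∫ x, ‖gradient U x‖ ^ 2
        ∂(volume.withDensity fun x =>
            ENNReal.ofReal (Real.exp (-U x) / ∫ y, Real.exp (-U y)))
      ≤ L ^ 2 * d / lam := by
  have hL : 0 < L := lt_of_lt_of_le hlam hlamL
  have hUc : Continuous U := hC2.continuous
  have hgradeq : gradient U = fun x =>
      (InnerProductSpace.toDual ℝ (EuclideanSpace ℝ (Fin d))).symm (fderiv ℝ U x) := rfl
  have hgcont : Continuous (gradient U) := by
    rw [hgradeq]
    exact (InnerProductSpace.toDual ℝ
      (EuclideanSpace ℝ (Fin d))).symm.continuous.comp (hC2.continuous_fderiv two_ne_zero)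
  set Z : ℝ := ∫ y, Real.exp (-U y) with hZ
  have hIexp : Integrable (fun x : EuclideanSpace ℝ (Fin d) => Real.exp (-U x)) :=
    exp_neg_integrable U lam hlam hC2 hconv
  have hZpos : 0 < Z := by
    rw [hZ, integral_pos_iff_support_of_nonneg (fun x => (Real.exp_pos _).le) hIexp]
    have hsupp : (Function.support fun x : EuclideanSpace ℝ (Fin d) => Real.exp (-U x))
        = Set.univ := by
      ext x; simp [Function.mem_support, Real.exp_ne_zero]
    rw [hsupp]
    exact isOpen_univ.measure_pos volume univ_nonempty
  have hNZ : ∫⁻ x, ENNReal.ofReal (Real.exp (-U x)) = ENNReal.ofReal Z :=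
    (ofReal_integral_eq_lintegral_ofReal hIexp
      (Eventually.of_forall fun x => (Real.exp_pos _).le)).symm
  have hf_cont : Continuous fun x : EuclideanSpace ℝ (Fin d) => ‖gradient U x‖ ^ 2 :=
    (hgcont.norm.pow 2)
  have hfm : Measurable fun x : EuclideanSpace ℝ (Fin d) =>
      ENNReal.ofReal (‖gradient U x‖ ^ 2) :=
    (ENNReal.continuous_ofReal.comp hf_cont).measurable
  have hgm : Measurable fun x : EuclideanSpace ℝ (Fin d) =>
      ENNReal.ofReal (Real.exp (-U x) / Z) :=
    (ENNReal.continuous_ofReal.comp ((hUc.neg.rexp).div_const Z)).measurable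
  rw [integral_eq_lintegral_of_nonneg_ae (Eventually.of_forall fun x => by positivity)
    hf_cont.aestronglyMeasurable]
  rw [lintegral_withDensity_eq_lintegral_mul volume hgm hfm]
  have hpt : ∀ x : EuclideanSpace ℝ (Fin d),
      ((fun x => ENNReal.ofReal (Real.exp (-U x) / Z)) *
        fun x => ENNReal.ofReal (‖gradient U x‖ ^ 2)) x
      = ENNReal.ofReal Z⁻¹ * ENNReal.ofReal (Real.exp (-U x) * ‖gradient U x‖ ^ 2) := by
    intro x
    simp only [Pi.mul_apply]
    rw [div_eq_mul_inv, mul_comm (Real.exp (-U x)) Z⁻¹,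
      ENNReal.ofReal_mul (by positivity : (0:ℝ) ≤ Z⁻¹), mul_assoc,
      ← ENNReal.ofReal_mul (Real.exp_pos _).le]
  rw [lintegral_congr hpt, lintegral_const_mul' _ _ ENNReal.ofReal_ne_top]
  have hIb : ∫⁻ x, ENNReal.ofReal (Real.exp (-U x) * ‖gradient U x‖ ^ 2)
      ≤ ENNReal.ofReal L * d * ENNReal.ofReal Z := by
    rw [← hNZ]
    exact global_bound U L lam hlam hlamL hC2 hsmooth hconv
  have hfin : ENNReal.ofReal L * d * ENNReal.ofReal Z ≠ ⊤ :=
    ENNReal.mul_ne_top (ENNReal.mul_ne_top ENNReal.ofReal_ne_top (ENNReal.natCast_ne_top d))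
      ENNReal.ofReal_ne_top
  calc (ENNReal.ofReal Z⁻¹ * ∫⁻ x, ENNReal.ofReal (Real.exp (-U x) * ‖gradient U x‖ ^ 2)).toReal
      ≤ (ENNReal.ofReal Z⁻¹ * (ENNReal.ofReal L * d * ENNReal.ofReal Z)).toReal := by
        apply ENNReal.toReal_mono (ENNReal.mul_ne_top ENNReal.ofReal_ne_top hfin)
        exact mul_le_mul_right hIb _
    _ = Z⁻¹ * (L * d * Z) := by
        rw [ENNReal.toReal_mul, ENNReal.toReal_mul, ENNReal.toReal_mul,
          ENNReal.toReal_ofReal (by positivity : (0:ℝ) ≤ Z⁻¹),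
          ENNReal.toReal_ofReal hL.le, ENNReal.toReal_ofReal hZpos.le, ENNReal.toReal_natCast]
    _ = L * d := by field_simp
    _ ≤ L ^ 2 * d / lam := by
        rw [le_div_iff₀ hlam]
        have hd0 : (0:ℝ) ≤ (d:ℝ) := Nat.cast_nonneg d
        have hkey : L * (d:ℝ) * lam ≤ L * (d:ℝ) * L :=
          mul_le_mul_of_nonneg_left hlamL (by positivity)
        nlinarith [hkey]

end
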